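/- arXiv:1912.04086 — 4 statements merged into one kernel-verified Lean document; each statement's English description precedes it below -/
import Mathlib

section
/- Let F be a continuous distribution function on [0,∞), let W : [0,1] → ℝ be bounded and measurable, let K(u) = ∫_u^1 (W(v) − 1) dv, and let I : [0,∞) → [0,∞) be non-decreasing, Lipschitz with constant 1, and I(0) = 0. Then for X with distribution F, E[I(X)·W(F(X))] − E[I(X)] = ∫_0^∞ K(F(t)) dI(t), where the right-hand side is a Lebesgue–Stieltjes integral with respect to the measure induced by I. -/
open MeasureTheory Set ProbabilityTheory

private lemma aux_map (μ : Measure ℝ) [IsProbabilityMeasure μ]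
    (F : ℝ → ℝ) (hFF : ⇑(cdf μ) = F) (hFc : Continuous F) :
    μ.map F = volume.restrict (Ioc 0 1) := by
  have hFm : Measurable F := hFc.measurable
  have hmono : Monotone F := hFF ▸ (cdf μ).mono
  have h0 : ∀ x, 0 ≤ F x := fun x => hFF ▸ cdf_nonneg μ x
  have h1 : ∀ x, F x ≤ 1 := fun x => hFF ▸ cdf_le_one μ x
  have hbot : Filter.Tendsto F Filter.atBot (nhds 0) := hFF ▸ tendsto_cdf_atBot μ
  have htop : Filter.Tendsto F Filter.atTop (nhds 1) := hFF ▸ tendsto_cdf_atTop μ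
  have hIic : ∀ x, μ (Iic x) = ENNReal.ofReal (F x) := by
    intro x
    rw [← hFF, ofReal_cdf]
  haveI : IsFiniteMeasure (volume.restrict (Ioc (0:ℝ) 1)) :=
    ⟨by simp [Real.volume_Ioc]⟩
  haveI : IsProbabilityMeasure (μ.map F) := Measure.isProbabilityMeasure_map hFm.aemeasurable
  refine Measure.ext_of_Iic _ _ (fun u => ?_)
  rw [Measure.map_apply hFm measurableSet_Iic, Measure.restrict_apply measurableSet_Iic]
  rcases lt_or_ge u 0 with hu | hu
  · have : F ⁻¹' Iic u = ∅ := by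
      ext x; simp only [mem_preimage, mem_Iic, mem_empty_iff_false, iff_false, not_le]
      exact lt_of_lt_of_le hu (h0 x)
    rw [this]
    have : Iic u ∩ Ioc (0:ℝ) 1 = ∅ := by
      ext v; simp only [mem_inter_iff, mem_Iic, mem_Ioc, mem_empty_iff_false, iff_false]
      rintro ⟨h1, h2, _⟩; linarith
    simp [this]
  rcases le_or_gt 1 u with hu1 | hu1
  · have : F ⁻¹' Iic u = univ := by
      ext x; simp only [mem_preimage, mem_Iic, mem_univ, iff_true]
      exact (h1 x).trans hu1
    rw [this]
    have : Iic u ∩ Ioc (0:ℝ) 1 = Ioc 0 1 := by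
      ext v; simp only [mem_inter_iff, mem_Iic, mem_Ioc, and_iff_right_iff_imp]
      rintro ⟨_, h2⟩; linarith
    simp [this, Real.volume_Ioc]
  · -- 0 ≤ u < 1
    have hvol : Iic u ∩ Ioc (0:ℝ) 1 = Ioc 0 u := by
      ext v; simp only [mem_inter_iff, mem_Iic, mem_Ioc]
      constructor
      · rintro ⟨a, b, c⟩; exact ⟨b, a⟩
      · rintro ⟨a, b⟩; exact ⟨b, a, by linarith⟩
    rw [hvol, Real.volume_Ioc]
    set S := F ⁻¹' Iic u with hS
    rcases eq_empty_or_nonempty S with hemp | hne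
    · have hu0 : u ≤ 0 := by
        refine ge_of_tendsto hbot ?_
        filter_upwards with x
        by_contra h
        exact (eq_empty_iff_forall_notMem.1 hemp x) (le_of_not_ge h)
      have : u = 0 := le_antisymm hu0 hu
      rw [hemp, this]; simp
    · have hclosed : IsClosed S := isClosed_Iic.preimage hFc
      have hbdd : BddAbove S := by
        have : ∀ᶠ x in Filter.atTop, u < F x := htop.eventually (eventually_gt_nhds hu1)
        obtain ⟨B, hB⟩ := this.exists_forall_of_atTop
        refine ⟨B, fun x hx => not_lt.1 fun hBx => ?_⟩
        have := hB x hBx.le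
        have hxu : F x ≤ u := hx
        linarith
      set s := sSup S with hs
      have hsmem : s ∈ S := hclosed.csSup_mem hne hbdd
      have hSIic : S = Iic s := by
        ext x; constructor
        · exact fun hx => le_csSup hbdd hx
        · exact fun hx => le_trans (hmono hx) hsmem
      have hFs : F s = u := by
        refine le_antisymm hsmem ?_
        by_contra h
        push_neg at h
        have hev : ∀ᶠ y in nhdsWithin s (Ioi s), F y < u :=
          ((hFc.tendsto s).eventually (eventually_lt_nhds h)).filter_mono nhdsWithin_le_nhds
        obtain ⟨y, hy1, hy2⟩ := (hev.and self_mem_nhdsWithin).exists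
        exact absurd (le_csSup hbdd (le_of_lt hy1 : F y ≤ u)) (not_le.2 hy2)
      rw [hSIic, hIic, hFs, sub_zero]

private lemma aux_inner (μ : Measure ℝ) [IsProbabilityMeasure μ]
    (F : ℝ → ℝ) (hFc : Continuous F) (hmono : Monotone F)
    (h0 : ∀ x, 0 ≤ F x) (h1 : ∀ x, F x ≤ 1)
    (W : ℝ → ℝ) (hWm : Measurable W)
    (hmap : μ.map F = volume.restrict (Ioc 0 1)) (t : ℝ) :
    ∫ x in Ioi t, (W (F x) - 1) ∂μ = ∫ v in (F t)..1, (W v - 1) := by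
  have hFm : Measurable F := hFc.measurable
  set g : ℝ → ℝ := fun x => W (F x) - 1 with hg
  set h : ℝ → ℝ := fun v => W v - 1 with hh
  have hhm : Measurable h := hWm.sub measurable_const
  have hnull : μ (F ⁻¹' {F t}) = 0 := by
    rw [← Measure.map_apply hFm (measurableSet_singleton _), hmap,
      Measure.restrict_apply (measurableSet_singleton _)]
    exact measure_mono_null (inter_subset_left) (Real.volume_singleton)
  have hae : (Ioi t).indicator g =ᵐ[μ] fun x => (Ioi (F t)).indicator h (F x) := by
    have hnull' : ∀ᵐ x ∂μ, F x ≠ F t := by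
      rw [ae_iff]
      convert hnull using 2
      ext x; simp
    filter_upwards [hnull'] with x hx
    rcases lt_or_ge t x with hxt | hxt
    · have : F t < F x := lt_of_le_of_ne (hmono hxt.le) (Ne.symm hx)
      rw [indicator_of_mem (mem_Ioi.2 hxt), indicator_of_mem (mem_Ioi.2 this)]
    · have : F x < F t := lt_of_le_of_ne (hmono hxt) hx
      rw [indicator_of_notMem (by simp only [mem_Ioi, not_lt]; exact hxt),
        indicator_of_notMem (by simp only [mem_Ioi, not_lt]; exact this.le)]
  calc ∫ x in Ioi t, g x ∂μ = ∫ x, (Ioi t).indicator g x ∂μ :=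
        (integral_indicator measurableSet_Ioi).symm
    _ = ∫ x, (Ioi (F t)).indicator h (F x) ∂μ := integral_congr_ae hae
    _ = ∫ v, (Ioi (F t)).indicator h v ∂(μ.map F) :=
        (integral_map hFm.aemeasurable
          ((hhm.indicator measurableSet_Ioi).aestronglyMeasurable)).symm
    _ = ∫ v in Ioi (F t), h v ∂(volume.restrict (Ioc 0 1)) := by
        rw [hmap, integral_indicator measurableSet_Ioi]
    _ = ∫ v in Ioc (F t) 1, h v := by
        rw [Measure.restrict_restrict measurableSet_Ioi]
        have hset : Ioi (F t) ∩ Ioc 0 1 = Ioc (F t) 1 := by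
          ext v
          simp only [mem_inter_iff, mem_Ioi, mem_Ioc]
          constructor
          · rintro ⟨a, _, c⟩; exact ⟨a, c⟩
          · rintro ⟨a, b⟩; exact ⟨a, lt_of_le_of_lt (h0 t) a, b⟩
        rw [hset]
    _ = ∫ v in (F t)..1, h v := (intervalIntegral.integral_of_le (h1 t)).symm

/-- Identity (2.11): the expected reinsurer surplus
`E[I(X)W(F(X))] − E[I(X)] = ∫_0^∞ K(F(t)) dI(t)`, where the right-hand side is a
Lebesgue–Stieltjes integral with respect to the measure induced by the non-decreasing,
1-Lipschitz reinsurance function `I` with `I(0) = 0`. -/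
theorem stmt_3 (μ : Measure ℝ) [IsProbabilityMeasure μ]
    (hsupp : ∀ᵐ x ∂μ, 0 ≤ x)
    (F : ℝ → ℝ) (hF : ∀ x, F x = (μ (Iic x)).toReal) (hFc : Continuous F)
    (W : ℝ → ℝ) (hWm : Measurable W) (C : ℝ) (hWb : ∀ u, |W u| ≤ C)
    (K : ℝ → ℝ) (hK : ∀ u, K u = ∫ v in u..1, (W v - 1))
    (I : StieltjesFunction ℝ) (hI0 : I 0 = 0) (hIlip : LipschitzWith 1 I)
    (hIfeas : ∀ x ≥ 0, 0 ≤ I x ∧ I x ≤ x)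
    (hint1 : Integrable (fun x => I x * W (F x)) μ)
    (hint2 : Integrable (fun x => I x) μ)
    (hint3 : IntegrableOn (fun t => K (F t)) (Ici 0) I.measure) :
    (∫ x, I x * W (F x) ∂μ) - (∫ x, I x ∂μ)
      = ∫ t in Ici (0:ℝ), K (F t) ∂I.measure := by
  have hFF : ⇑(cdf μ) = F := funext fun x => (cdf_eq_real μ x).trans (hF x).symm
  have hFm : Measurable F := hFc.measurable
  have hmono : Monotone F := hFF ▸ (cdf μ).mono
  have h0 : ∀ x, 0 ≤ F x := fun x => hFF ▸ cdf_nonneg μ x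
  have h1 : ∀ x, F x ≤ 1 := fun x => hFF ▸ cdf_le_one μ x
  have hmap := aux_map μ F hFF hFc
  -- μ has no atoms
  have hsing : ∀ a : ℝ, μ {a} = 0 := by
    intro a
    rw [← measure_cdf μ, StieltjesFunction.measure_singleton]
    have hc : Continuous ⇑(cdf μ) := by rw [hFF]; exact hFc
    have : Function.leftLim ⇑(cdf μ) a = cdf μ a :=
      leftLim_eq_of_tendsto
        ((hc.tendsto a).mono_left nhdsWithin_le_nhds)
    rw [this, sub_self, ENNReal.ofReal_zero]
  haveI : NoAtoms μ := ⟨hsing⟩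
  -- the Stieltjes measure of I has no atom at 0
  have hIc : Continuous ⇑I := hIlip.continuous
  have hIm : Measurable ⇑I := hIc.measurable
  have hIsing : ∀ a : ℝ, I.measure {a} = 0 := by
    intro a
    rw [StieltjesFunction.measure_singleton]
    have : Function.leftLim ⇑I a = I a :=
      leftLim_eq_of_tendsto
        ((hIc.tendsto a).mono_left nhdsWithin_le_nhds)
    rw [this, sub_self, ENNReal.ofReal_zero]
  set τ : Measure ℝ := I.measure.restrict (Ici 0) with hτ
  have hτ_Ioc : ∀ x : ℝ, τ (Ioc 0 x) = ENNReal.ofReal (I x) := by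
    intro x
    have hss : Ioc (0:ℝ) x ∩ Ici 0 = Ioc 0 x :=
      inter_eq_self_of_subset_left (fun t ht => le_of_lt ht.1)
    rw [hτ, Measure.restrict_apply measurableSet_Ioc, hss,
      I.measure_Ioc, hI0, sub_zero]
  set g : ℝ → ℝ := fun x => W (F x) - 1 with hg
  have hgm : Measurable g := (hWm.comp hFm).sub measurable_const
  have hgb : ∀ x, |g x| ≤ C + 1 := by
    intro x
    have h := abs_le.1 (hWb (F x))
    rw [hg, abs_le]
    constructor <;> simp <;> linarith [h.1, h.2]
  set F2 : ℝ → ℝ → ℝ := fun t x => (Ioc 0 x).indicator (fun _ => (1:ℝ)) t * g x with hF2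
  have hsec : ∀ x, (fun t => F2 t x) = (Ioc 0 x).indicator (fun _ => g x) := by
    intro x; funext t
    by_cases h : t ∈ Ioc 0 x
    · simp only [hF2, indicator_of_mem h, one_mul]
    · simp only [hF2, indicator_of_notMem h, zero_mul]
  have hmF2 : Measurable (Function.uncurry F2) := by
    have hsetm : MeasurableSet {q : ℝ × ℝ | q.1 ∈ Ioc 0 q.2} := by
      simp only [mem_Ioc, setOf_and]
      exact (measurableSet_lt measurable_const measurable_fst).inter
        (measurableSet_le measurable_fst measurable_snd)
    have heq : Function.uncurry F2 =
        fun q : ℝ × ℝ => ({q : ℝ × ℝ | q.1 ∈ Ioc 0 q.2}).indicator (fun _ => (1:ℝ)) q * g q.2 := by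
      funext q
      show F2 q.1 q.2 = _
      by_cases hq : q.1 ∈ Ioc 0 q.2
      · simp only [hF2, indicator_of_mem hq, one_mul,
          indicator_of_mem (show q ∈ {q : ℝ × ℝ | q.1 ∈ Ioc 0 q.2} from hq)]
      · simp only [hF2, indicator_of_notMem hq, zero_mul,
          indicator_of_notMem (show q ∉ {q : ℝ × ℝ | q.1 ∈ Ioc 0 q.2} from hq)]
    rw [heq]
    exact (measurable_const.indicator hsetm).mul (hgm.comp measurable_snd)
  -- integrability on the product
  have hsec_int : ∀ x : ℝ, Integrable (fun t => F2 t x) τ := by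
    intro x
    rw [hsec x, integrable_indicator_iff measurableSet_Ioc]
    refine (integrableOn_const_iff enorm_ne_top).2 (Or.inr ?_)
    calc τ (Ioc 0 x) = ENNReal.ofReal (I x) := hτ_Ioc x
      _ < ⊤ := ENNReal.ofReal_lt_top
  have hnorm : (fun x => ∫ t, ‖F2 t x‖ ∂τ) =ᵐ[μ] fun x => ‖g x‖ * I x := by
    filter_upwards [hsupp] with x hx
    have heqn : (fun t => ‖F2 t x‖) = (Ioc 0 x).indicator (fun _ => ‖g x‖) := by
      funext t
      rw [show F2 t x = (Ioc 0 x).indicator (fun _ => g x) t from congrFun (hsec x) t,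
        norm_indicator_eq_indicator_norm]
    rw [heqn, integral_indicator_const _ measurableSet_Ioc, measureReal_def, hτ_Ioc,
      ENNReal.toReal_ofReal (hIfeas x hx).1, smul_eq_mul, mul_comm]
  have hgi : Integrable (fun x => ‖g x‖ * I x) μ := by
    refine Integrable.mono' (hint2.const_mul (C + 1))
      ((hgm.norm.mul hIm).aestronglyMeasurable) ?_
    filter_upwards [hsupp] with x hx
    have hIx : 0 ≤ I x := (hIfeas x hx).1
    have hgx : ‖g x‖ ≤ C + 1 := hgb x
    rw [Real.norm_eq_abs, abs_mul, abs_of_nonneg hIx, abs_norm]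
    rw [Real.norm_eq_abs] at hgx
    exact mul_le_mul_of_nonneg_right hgx hIx
  have hIntF2 : Integrable (Function.uncurry F2) (τ.prod μ) := by
    refine (integrable_prod_iff' hmF2.aestronglyMeasurable).2 ⟨?_, ?_⟩
    · exact Filter.Eventually.of_forall fun x => hsec_int x
    · exact hgi.congr hnorm.symm
  have hswap := integral_integral_swap hIntF2
  -- inner integral over τ
  have hinner_x : ∀ᵐ x ∂μ, (∫ t, F2 t x ∂τ) = I x * g x := by
    filter_upwards [hsupp] with x hx
    rw [hsec x, integral_indicator_const _ measurableSet_Ioc, measureReal_def, hτ_Ioc,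
      ENNReal.toReal_ofReal (hIfeas x hx).1, smul_eq_mul]
  -- inner integral over μ
  have hpos : ∀ᵐ t ∂τ, 0 < t := by
    rw [ae_iff]
    have : {t : ℝ | ¬ 0 < t} = Iic 0 := by ext t; simp
    rw [this, hτ, Measure.restrict_apply measurableSet_Iic]
    have : Iic (0:ℝ) ∩ Ici 0 = {0} := by ext t; simp [le_antisymm_iff, and_comm]
    rw [this, hIsing 0]
  have hinner_t : ∀ᵐ t ∂τ, (∫ x, F2 t x ∂μ) = K (F t) := by
    filter_upwards [hpos] with t ht
    have heq : (fun x => F2 t x) = (Ici t).indicator g := by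
      funext x
      by_cases hx : t ≤ x
      · have h1' : t ∈ Ioc 0 x := ⟨ht, hx⟩
        have h2' : x ∈ Ici t := hx
        simp only [hF2, indicator_of_mem h1', one_mul, indicator_of_mem h2']
      · have h1' : t ∉ Ioc 0 x := fun h => hx h.2
        have h2' : x ∉ Ici t := hx
        simp only [hF2, indicator_of_notMem h1', zero_mul, indicator_of_notMem h2']
    rw [heq, integral_indicator measurableSet_Ici, integral_Ici_eq_integral_Ioi' (hsing t),
      aux_inner μ F hFc hmono h0 h1 W hWm hmap t, ← hK]
  calc (∫ x, I x * W (F x) ∂μ) - (∫ x, I x ∂μ)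
      = ∫ x, (I x * W (F x) - I x) ∂μ := (integral_sub hint1 hint2).symm
    _ = ∫ x, I x * g x ∂μ := by congr 1; funext x; rw [hg]; ring
    _ = ∫ x, (∫ t, F2 t x ∂τ) ∂μ := (integral_congr_ae hinner_x).symm
    _ = ∫ t, (∫ x, F2 t x ∂μ) ∂τ := hswap.symm
    _ = ∫ t, K (F t) ∂τ := integral_congr_ae hinner_t
    _ = ∫ t in Ici (0:ℝ), K (F t) ∂I.measure := rfl
end

section
/- Suppose W : [0,1] → ℝ is non-decreasing with K(u) = ∫_u^1(W(v)−1)dv ≥ 0 for all u. Let I be any feasible reinsurance function with expected surplus G(I) = γE[X] − ∫_0^∞ K(F(x)) dI(x) − β(x_ε − I(x_ε)) > 0, and define Ĩ(x) = I(min(x, x_ε)). Then Ĩ is feasible, x_ε − Ĩ(x_ε) = x_ε − I(x_ε) (same Value at Risk), G(Ĩ) ≥ G(I), and consequently the risk-over-surplus ratio satisfies C(Ĩ) = (x_ε − Ĩ(x_ε))/G(Ĩ) ≤ (x_ε − I(x_ε))/G(I) = C(I). -/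
open MeasureTheory Set

/-- Truncation step in Proposition 3.2: for a feasible contract `I` with positive expected
surplus, the truncated contract `Ĩ(x) = I(min(x, x_ε))` is feasible, has the same Value at
Risk, at least as large an expected surplus, and hence at most the same risk-over-surplus
ratio. -/
theorem stmt_7 (μ : Measure ℝ) [IsProbabilityMeasure μ] (hsupp : ∀ᵐ x ∂μ, 0 ≤ x)
    (hEX : Integrable id μ)
    (F : ℝ → ℝ) (hF : ∀ x, F x = (μ (Iic x)).toReal) (hFc : Continuous F)
    (ε γ β : ℝ) (hε : ε ∈ Ioo (0:ℝ) 1) (hγ : 0 < γ) (hβ : 0 ≤ β)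
    (W : ℝ → ℝ) (hW : MonotoneOn W (Icc 0 1))
    (K : ℝ → ℝ) (hK : ∀ u, K u = ∫ v in u..1, (W v - 1)) (hKpos : ∀ u, 0 ≤ K u)
    (xε : ℝ) (hxε : xε = sInf {x | 1 - F x ≤ ε}) (hxε0 : 0 ≤ xε)
    (I Itil : StieltjesFunction ℝ)
    (hIlip : LipschitzWith 1 I) (hI0 : I 0 = 0)
    (hIfeas : ∀ x ≥ (0:ℝ), 0 ≤ I x ∧ I x ≤ x)
    (hItil : ∀ x, Itil x = I (min x xε))
    (G : StieltjesFunction ℝ → ℝ)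
    (hG : ∀ J : StieltjesFunction ℝ, G J = γ * (∫ x, x ∂μ)
        - (∫ t in Ici (0:ℝ), K (F t) ∂J.measure) - β * (xε - J xε))
    (hGpos : 0 < G I)
    (hint : IntegrableOn (fun t => K (F t)) (Ici 0) I.measure)
    (hint' : IntegrableOn (fun t => K (F t)) (Ici 0) Itil.measure) :
    (LipschitzWith 1 Itil ∧ Itil 0 = 0 ∧ ∀ x ≥ (0:ℝ), 0 ≤ Itil x ∧ Itil x ≤ x) ∧
    xε - Itil xε = xε - I xε ∧
    G I ≤ G Itil ∧
    (xε - Itil xε) / G Itil ≤ (xε - I xε) / G I := by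
  have hImono : Monotone I := I.mono
  have hItilfun : (⇑Itil) = fun x => I (min x xε) := funext hItil
  have hlip : LipschitzWith 1 Itil := by
    rw [hItilfun]
    have hmin : LipschitzWith 1 (fun x : ℝ => min x xε) :=
      by simpa using LipschitzWith.id.min ((LipschitzWith.const' xε).weaken zero_le_one)
    simpa [Function.comp_def] using hIlip.comp hmin
  have hItil0 : Itil 0 = 0 := by
    rw [hItil 0, min_eq_left hxε0, hI0]
  have hfeas : ∀ x ≥ (0:ℝ), 0 ≤ Itil x ∧ Itil x ≤ x := by
    intro x hx
    rw [hItil x]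
    have hmin0 : (0:ℝ) ≤ min x xε := le_min hx hxε0
    refine ⟨(hIfeas _ hmin0).1, le_trans (hIfeas _ hmin0).2 (min_le_left _ _)⟩
  have hItilxε : Itil xε = I xε := by rw [hItil xε, min_self]
  -- measure equality
  have hmeas : Itil.measure = I.measure.restrict (Iic xε) := by
    refine Measure.ext_of_Ioc _ _ (fun a b hab => ?_)
    rw [Measure.restrict_apply measurableSet_Ioc, Ioc_inter_Iic,
      StieltjesFunction.measure_Ioc, StieltjesFunction.measure_Ioc, hItil, hItil]
    rcases le_or_gt a xε with h | h
    · rw [min_eq_left h]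
    · have hb : xε ≤ b := le_of_lt (h.trans_le hab.le)
      rw [min_eq_right h.le, min_eq_right hb]
      rw [ENNReal.ofReal_eq_zero.2 (by simp), ENNReal.ofReal_eq_zero.2
        (sub_nonpos.2 (hImono h.le))]
  have hKFnn : ∀ t, 0 ≤ K (F t) := fun t => hKpos (F t)
  have hintle : (∫ t in Ici (0:ℝ), K (F t) ∂Itil.measure)
      ≤ ∫ t in Ici (0:ℝ), K (F t) ∂I.measure := by
    rw [hmeas, Measure.restrict_restrict measurableSet_Ici]
    have h1 : Ici (0:ℝ) ∩ Iic xε = Icc 0 xε := Ici_inter_Iic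
    rw [h1]
    refine setIntegral_mono_set hint ?_ ?_
    · exact Filter.Eventually.of_forall hKFnn
    · exact HasSubset.Subset.eventuallyLE (Icc_subset_Ici_self)
  have hGI : G I ≤ G Itil := by
    rw [hG I, hG Itil, hItilxε]
    linarith
  refine ⟨⟨hlip, hItil0, hfeas⟩, by rw [hItilxε], hGI, ?_⟩
  rw [hItilxε]
  have hnum : 0 ≤ xε - I xε := sub_nonneg.2 (hIfeas xε hxε0).2
  gcongr
end

section
/- Let X_J = Y₁ + ... + Y_J be a sum of independent random variables with common mean ξ > 0 and variance σ² > 0 satisfying the Lindeberg condition, and let F_J⁰ be the distribution function of X_J⁰ = (X_J − Jξ)/(√J σ). Let x_J⁰ = −√J ξ/σ and let x_{εJ}⁰ be the (1−ε)-quantile of X_J⁰, which converges to the standard normal quantile φ_ε. If W : [0,1] → ℝ is integrable and K(u) = ∫_u^1(W(v)−1)dv with K(0) > 0, then (1/x_J⁰)∫_{x_J⁰}^{x_{εJ}⁰} K(F_J⁰(t)) dt → −K(0) as J → ∞. -/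
open MeasureTheory Set Filter ProbabilityTheory

set_option maxHeartbeats 1000000

/-- Lemma A.2: for a large portfolio `X_J = Y₁ + ⋯ + Y_J` of independent risks with mean
`ξ > 0` and variance `σ² > 0` satisfying the Lindeberg condition, with `F_J⁰` the
distribution function of the normalized sum, `x_J⁰ = −√J ξ/σ`, and `x_{εJ}⁰` the
`(1−ε)`-quantile converging to the normal quantile `φ_ε`,
`(1/x_J⁰) ∫_{x_J⁰}^{x_{εJ}⁰} K(F_J⁰(t)) dt → −K(0)` as `J → ∞`. -/
theorem stmt_11
    {Ω : Type*} [MeasurableSpace Ω] (P : Measure Ω) [IsProbabilityMeasure P]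
    (Y : ℕ → Ω → ℝ) (hmeas : ∀ i, Measurable (Y i))
    (hindep : iIndepFun Y P)
    (ξ σ : ℝ) (hξ : 0 < ξ) (hσ : 0 < σ)
    (hmean : ∀ i, ∫ ω, Y i ω ∂P = ξ)
    (hvar : ∀ i, ∫ ω, (Y i ω - ξ) ^ 2 ∂P = σ ^ 2)
    (hlind : ∀ η > (0:ℝ), Tendsto (fun J : ℕ =>
        (1 / (J * σ ^ 2)) * ∑ i ∈ Finset.range J,
          ∫ ω in {ω | η * (Real.sqrt J * σ) ≤ |Y i ω - ξ|}, (Y i ω - ξ) ^ 2 ∂P)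
        atTop (nhds 0))
    (X0 : ℕ → Ω → ℝ)
    (hX0 : ∀ J ω, X0 J ω = ((∑ i ∈ Finset.range J, Y i ω) - J * ξ) / (Real.sqrt J * σ))
    (F0 : ℕ → ℝ → ℝ) (hF0 : ∀ J t, F0 J t = (P {ω | X0 J ω ≤ t}).toReal)
    (ε : ℝ) (hε : ε ∈ Ioo (0:ℝ) 1)
    (xe : ℕ → ℝ) (hxe : ∀ J, xe J = sInf {x | 1 - F0 J x ≤ ε})
    (φε : ℝ) (hφε : Tendsto xe atTop (nhds φε))
    (W : ℝ → ℝ) (hWint : IntervalIntegrable W MeasureTheory.volume 0 1)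
    (K : ℝ → ℝ) (hK : ∀ u, K u = ∫ v in u..1, (W v - 1)) (hK0 : 0 < K 0)
    (xJ0 : ℕ → ℝ) (hxJ0 : ∀ J, xJ0 J = -(Real.sqrt J * ξ / σ)) :
    Tendsto (fun J => (1 / xJ0 J) * ∫ t in (xJ0 J)..(xe J), K (F0 J t))
      atTop (nhds (-K 0)) := by
  obtain ⟨hε0, hε1⟩ := hε
  -- ## L² facts about the Y i and the partial sums
  have hYL2 : ∀ i, MemLp (Y i) 2 P := by
    intro i
    have hint : Integrable (fun ω => (Y i ω - ξ) ^ 2) P := by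
      by_contra h
      have h0 := hvar i
      rw [integral_undef h] at h0
      exact absurd h0.symm (ne_of_gt (by positivity))
    have hZ2 : MemLp (fun ω => Y i ω - ξ) 2 P :=
      (memLp_two_iff_integrable_sq
        ((hmeas i).sub measurable_const).aestronglyMeasurable).2 hint
    have h2 : ((fun ω => Y i ω - ξ) + fun _ => ξ) = Y i := by funext ω; simp
    exact h2 ▸ hZ2.add (memLp_const ξ)
  have hYint : ∀ i, Integrable (Y i) P := fun i => (hYL2 i).integrable one_le_two
  have hSmean : ∀ J : ℕ, ∫ ω, (∑ i ∈ Finset.range J, Y i ω) ∂P = J * ξ := by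
    intro J
    rw [integral_finset_sum _ fun i _ => hYint i]
    simp [hmean, mul_comm]
  have hVarY : ∀ i, variance (Y i) P = σ ^ 2 := by
    intro i
    rw [variance_eq_integral (hmeas i).aemeasurable, hmean i, hvar i]
  have hVarS : ∀ J : ℕ,
      variance (fun ω => ∑ i ∈ Finset.range J, Y i ω) P = J * σ ^ 2 := by
    intro J
    have h1 : (fun ω => ∑ i ∈ Finset.range J, Y i ω)
        = ∑ i ∈ Finset.range J, Y i := by funext ω; simp
    rw [h1, IndepFun.variance_sum (fun i _ => hYL2 i)
      (fun i _ j _ hij => hindep.indepFun hij)]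
    simp [hVarY, mul_comm]
  -- ## Basic properties of F0
  have hF0mono : ∀ J, Monotone (F0 J) := by
    intro J t s hts
    rw [hF0, hF0]
    refine ENNReal.toReal_mono (measure_ne_top P _) (measure_mono ?_)
    exact fun ω hω => le_trans hω hts
  have hF0mem : ∀ J t, F0 J t ∈ Icc (0:ℝ) 1 := by
    intro J t
    rw [hF0]
    refine ⟨ENNReal.toReal_nonneg, ?_⟩
    calc (P {ω | X0 J ω ≤ t}).toReal ≤ (1 : ENNReal).toReal :=
          ENNReal.toReal_mono ENNReal.one_ne_top prob_le_one
      _ = 1 := by simp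
  -- ## Chebyshev: for J ≥ 1 and t < 0, F0 J t ≤ 1/t²
  have hCheb : ∀ J : ℕ, 1 ≤ J → ∀ t : ℝ, t < 0 → F0 J t ≤ 1 / t ^ 2 := by
    intro J hJ t ht
    have hJ0 : (0:ℝ) < J := by exact_mod_cast hJ
    have hsJ : 0 < Real.sqrt J := Real.sqrt_pos.2 hJ0
    have hSL2 : MemLp (fun ω => ∑ i ∈ Finset.range J, Y i ω) 2 P := by
      have h := memLp_finset_sum' (μ := P) (Finset.range J) (fun i _ => hYL2 i)
      have h1 : (fun ω => ∑ i ∈ Finset.range J, Y i ω)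
          = ∑ i ∈ Finset.range J, Y i := by funext ω; simp
      rwa [h1]
    have hc : (0:ℝ) < -t * (Real.sqrt J * σ) :=
      mul_pos (neg_pos.2 ht) (mul_pos hsJ hσ)
    have hcheb := meas_ge_le_variance_div_sq (μ := P) hSL2 hc
    have hsub : {ω | X0 J ω ≤ t} ⊆
        {ω | -t * (Real.sqrt J * σ) ≤
          |(∑ i ∈ Finset.range J, Y i ω) - ∫ x, (∑ i ∈ Finset.range J, Y i x) ∂P|} := by
      intro ω hω
      simp only [Set.mem_setOf_eq] at hω ⊢
      rw [hSmean J]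
      have hpos : 0 < Real.sqrt J * σ := mul_pos hsJ hσ
      rw [hX0] at hω
      have h1 : (∑ i ∈ Finset.range J, Y i ω) - J * ξ ≤ t * (Real.sqrt J * σ) :=
        (div_le_iff₀ hpos).1 hω
      have h2 : -t * (Real.sqrt J * σ)
          ≤ -((∑ i ∈ Finset.range J, Y i ω) - J * ξ) := by nlinarith
      exact le_trans h2 (neg_le_abs _)
    have hV : variance (fun ω => ∑ i ∈ Finset.range J, Y i ω) P
        / (-t * (Real.sqrt J * σ)) ^ 2 = 1 / t ^ 2 := by
      have hsq : Real.sqrt J ^ 2 = (J:ℝ) := Real.sq_sqrt (Nat.cast_nonneg J)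
      have hpow : (-t * (Real.sqrt J * σ)) ^ 2 = (J:ℝ) * σ ^ 2 * t ^ 2 := by
        calc (-t * (Real.sqrt J * σ)) ^ 2
            = Real.sqrt J ^ 2 * σ ^ 2 * t ^ 2 := by ring
          _ = (J:ℝ) * σ ^ 2 * t ^ 2 := by rw [hsq]
      have ht2 : (0:ℝ) < t ^ 2 := by nlinarith
      rw [hVarS J, hpow, div_eq_div_iff (by positivity) ht2.ne']
      ring
    rw [hF0]
    refine ENNReal.toReal_le_of_le_ofReal (by positivity) ?_
    calc P {ω | X0 J ω ≤ t} ≤ P _ := measure_mono hsub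
      _ ≤ ENNReal.ofReal _ := hcheb
      _ = ENNReal.ofReal (1 / t ^ 2) := by rw [hV]
  -- ## Facts about K and its modulus of continuity at 0
  set G : ℝ → ℝ := fun u => ∫ v in (0:ℝ)..u, |W v - 1| with hGdef
  have hW1 : IntervalIntegrable (fun v => W v - 1) volume 0 1 :=
    hWint.sub intervalIntegrable_const
  have hW1abs : IntervalIntegrable (fun v => |W v - 1|) volume 0 1 := hW1.abs
  have hW1sub : ∀ u v : ℝ, u ∈ Icc (0:ℝ) 1 → v ∈ Icc (0:ℝ) 1 →
      IntervalIntegrable (fun x => W x - 1) volume u v := by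
    intro u v hu hv
    refine hW1.mono_set ?_
    rw [uIcc_of_le (zero_le_one' ℝ)]
    exact uIcc_subset_Icc hu hv
  have hKdiff : ∀ u ∈ Icc (0:ℝ) 1, |K u - K 0| ≤ G u := by
    intro u hu
    have h1 : IntervalIntegrable (fun v => W v - 1) volume 0 u :=
      hW1sub 0 u (by norm_num) hu
    have h2 : IntervalIntegrable (fun v => W v - 1) volume u 1 :=
      hW1sub u 1 hu (by norm_num)
    have hadd := intervalIntegral.integral_add_adjacent_intervals h1 h2
    have heq : K u - K 0 = -∫ v in (0:ℝ)..u, (W v - 1) := by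
      rw [hK u, hK 0]; linarith
    rw [heq, abs_neg]
    exact intervalIntegral.abs_integral_le_integral_abs hu.1
  have hGmono : ∀ u v : ℝ, 0 ≤ u → u ≤ v → v ≤ 1 → G u ≤ G v := by
    intro u v hu huv hv
    have h1 : IntervalIntegrable (fun x => |W x - 1|) volume 0 u :=
      (hW1sub 0 u (by norm_num) ⟨hu, le_trans huv hv⟩).abs
    have h2 : IntervalIntegrable (fun x => |W x - 1|) volume u v :=
      (hW1sub u v ⟨hu, le_trans huv hv⟩ ⟨le_trans hu huv, hv⟩).abs
    have hadd := intervalIntegral.integral_add_adjacent_intervals h1 h2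
    have h3 : 0 ≤ ∫ x in u..v, |W x - 1| :=
      intervalIntegral.integral_nonneg huv (fun x _ => abs_nonneg _)
    simp only [hGdef]
    linarith [hadd]
  have hGnonneg : ∀ u : ℝ, 0 ≤ u → 0 ≤ G u := by
    intro u hu
    exact intervalIntegral.integral_nonneg hu (fun x _ => abs_nonneg _)
  have hGcont : ContinuousOn G (Icc (0:ℝ) 1) := by
    have h := intervalIntegral.continuousOn_primitive_interval'
      (μ := volume) hW1abs (a := 0) left_mem_uIcc
    rwa [uIcc_of_le (zero_le_one' ℝ)] at h
  have hGsmall : ∀ δ : ℝ, 0 < δ → ∃ u₀ : ℝ, 0 < u₀ ∧ u₀ ≤ 1 ∧ G u₀ < δ := by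
    intro δ hδ
    have hc0 : ContinuousWithinAt G (Icc (0:ℝ) 1) 0 :=
      hGcont 0 (by norm_num)
    rw [Metric.continuousWithinAt_iff] at hc0
    obtain ⟨η, hη, hball⟩ := hc0 δ hδ
    refine ⟨min (η/2) 1, by positivity, min_le_right _ _, ?_⟩
    have hmem : min (η/2) 1 ∈ Icc (0:ℝ) 1 := ⟨by positivity, min_le_right _ _⟩
    have hd : dist (min (η/2) 1) 0 < η := by
      rw [Real.dist_eq, sub_zero, abs_of_pos (by positivity)]
      calc min (η/2) 1 ≤ η/2 := min_le_left _ _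
        _ < η := by linarith
    have := hball hmem hd
    have hG0 : G 0 = 0 := intervalIntegral.integral_same
    rw [Real.dist_eq, hG0, sub_zero] at this
    exact lt_of_le_of_lt (le_abs_self _) this
  -- continuity of K on [0,1] and measurability / integrability of K ∘ F0
  have hKcont : ContinuousOn K (Icc (0:ℝ) 1) := by
    have hint : IntegrableOn (fun v => W v - 1) (uIcc (0:ℝ) 1) volume := by
      rw [uIcc_of_le (zero_le_one' ℝ),
        ← intervalIntegrable_iff_integrableOn_Icc_of_le (zero_le_one' ℝ)]
      exact hW1
    have h := intervalIntegral.continuousOn_primitive_interval_left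
      (μ := volume) (a := (0:ℝ)) (b := (1:ℝ)) hint
    rw [uIcc_of_le (zero_le_one' ℝ)] at h
    exact h.congr fun u _ => hK u
  have hKm : ∀ J, Measurable fun t => K (F0 J t) := by
    intro J
    have hFm : Measurable (F0 J) := (hF0mono J).measurable
    have hsub : Measurable fun t => (⟨F0 J t, hF0mem J t⟩ : Icc (0:ℝ) 1) :=
      hFm.subtype_mk
    exact (hKcont.restrict.measurable).comp hsub
  have hKbd : ∀ u ∈ Icc (0:ℝ) 1, |K u| ≤ |K 0| + G 1 := by
    intro u hu
    calc |K u| = |(K u - K 0) + K 0| := by ring_nf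
      _ ≤ |K u - K 0| + |K 0| := abs_add_le _ _
      _ ≤ G u + |K 0| := by linarith [hKdiff u hu]
      _ ≤ G 1 + |K 0| := by linarith [hGmono u 1 hu.1 hu.2 le_rfl]
      _ = |K 0| + G 1 := by ring
  have hII : ∀ (J : ℕ) (a b : ℝ),
      IntervalIntegrable (fun t => K (F0 J t)) volume a b := by
    intro J a b
    rw [intervalIntegrable_iff]
    apply Measure.integrableOn_of_bounded (M := |K 0| + G 1)
    · rw [Set.uIoc]
      exact measure_Ioc_lt_top.ne
    · exact (hKm J).aestronglyMeasurable
    · exact ae_of_all _ fun t => by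
        simpa [Real.norm_eq_abs] using hKbd _ (hF0mem J t)
  -- ## Limits of xJ0
  have hxtend : Tendsto (fun J : ℕ => -xJ0 J) atTop atTop := by
    have hsq : Tendsto Real.sqrt atTop atTop := by
      apply tendsto_atTop_atTop_of_monotone
        (fun x y h => Real.sqrt_le_sqrt h)
      intro b
      exact ⟨b ^ 2, by rw [Real.sqrt_sq_eq_abs]; exact le_abs_self b⟩
    have hn : Tendsto (fun J : ℕ => Real.sqrt J) atTop atTop :=
      hsq.comp tendsto_natCast_atTop_atTop
    have h := hn.atTop_mul_const (div_pos hξ hσ)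
    refine h.congr fun J => ?_
    rw [hxJ0, neg_neg, mul_div_assoc]
  have hinv0 : Tendsto (fun J => 1 / xJ0 J) atTop (nhds 0) := by
    have h := (tendsto_inv_atTop_zero.comp hxtend).neg
    rw [neg_zero] at h
    refine h.congr fun J => ?_
    simp [Function.comp, inv_neg, one_div]
  -- ## the second (main) term
  have h1 : Tendsto (fun J => (xe J / xJ0 J - 1) * K 0) atTop (nhds (-K 0)) := by
    have h := ((hφε.mul hinv0).sub_const 1).mul_const (K 0)
    rw [show (φε * 0 - 1) * K 0 = -K 0 by ring] at h
    simp only [mul_one_div] at h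
    exact h
  -- ## the first term tends to 0
  have h2 : Tendsto
      (fun J => (1 / xJ0 J) * ∫ t in (xJ0 J)..(xe J), (K (F0 J t) - K 0))
      atTop (nhds 0) := by
    rw [NormedAddCommGroup.tendsto_nhds_zero]
    intro δ hδ
    obtain ⟨u₀, hu₀pos, hu₀le, hGu₀⟩ := hGsmall (δ/4) (by positivity)
    set C := G 1 with hCdef
    have hC0 : 0 ≤ C := hGnonneg 1 zero_le_one
    set A : ℝ := max (|φε| + 1) (1 / Real.sqrt u₀) with hAdef
    have hA1 : |φε| + 1 ≤ A := le_max_left _ _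
    have hA0 : 0 < A := lt_of_lt_of_le (by positivity) hA1
    have hAu : 1 / A ^ 2 ≤ u₀ := by
      have hs : 0 < Real.sqrt u₀ := Real.sqrt_pos.2 hu₀pos
      have h : 1 / Real.sqrt u₀ ≤ A := le_max_right _ _
      have h2 : 1 / A ≤ Real.sqrt u₀ := by
        rw [div_le_iff₀ hA0]
        rw [div_le_iff₀ hs] at h
        nlinarith
      calc 1 / A ^ 2 = (1 / A) ^ 2 := by rw [div_pow, one_pow]
        _ ≤ Real.sqrt u₀ ^ 2 := by
            apply pow_le_pow_left₀ (by positivity) h2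
        _ = u₀ := Real.sq_sqrt hu₀pos.le
    have hev1 : ∀ᶠ J : ℕ in atTop, |xe J - φε| < 1 := by
      obtain ⟨N, hN⟩ := Metric.tendsto_atTop.mp hφε 1 one_pos
      filter_upwards [eventually_ge_atTop N] with J hJ
      simpa [Real.dist_eq] using hN J hJ
    have hev2 : ∀ᶠ J : ℕ in atTop,
        max (A + 1) (8 * A * (C + 1) / δ) ≤ -xJ0 J :=
      hxtend.eventually_ge_atTop _
    filter_upwards [hev1, hev2, eventually_ge_atTop 1] with J hxeJ hbig hJ1
    set a := xJ0 J with hadef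
    set b := xe J with hbdef
    have hbig1 : A + 1 ≤ -a := le_trans (le_max_left _ _) hbig
    have hbig2 : 8 * A * (C + 1) / δ ≤ -a := le_trans (le_max_right _ _) hbig
    have haA : a ≤ -A - 1 := by linarith
    have haneg : a < 0 := by linarith
    have hbA1 : -A ≤ b := by
      have := abs_lt.1 hxeJ
      have h0 : -|φε| ≤ φε := neg_abs_le φε
      linarith
    have hbA2 : b ≤ A := by
      have := abs_lt.1 hxeJ
      have h0 : φε ≤ |φε| := le_abs_self φε
      linarith
    have hI1 : IntervalIntegrable (fun t => K (F0 J t) - K 0) volume a (-A) :=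
      (hII J a (-A)).sub intervalIntegrable_const
    have hI2 : IntervalIntegrable (fun t => K (F0 J t) - K 0) volume (-A) b :=
      (hII J (-A) b).sub intervalIntegrable_const
    have hsplit : (∫ t in a..b, (K (F0 J t) - K 0))
        = (∫ t in a..(-A), (K (F0 J t) - K 0))
          + ∫ t in (-A)..b, (K (F0 J t) - K 0) :=
      (intervalIntegral.integral_add_adjacent_intervals hI1 hI2).symm
    -- bound on the far-left piece
    have hB1 : ‖∫ t in a..(-A), (K (F0 J t) - K 0)‖ ≤ (δ/4) * |(-A) - a| := by
      apply intervalIntegral.norm_integral_le_of_norm_le_const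
      intro t ht
      rw [Set.uIoc_of_le (by linarith : a ≤ -A)] at ht
      have ht2 : t ≤ -A := ht.2
      have hFt : F0 J t ≤ u₀ := by
        calc F0 J t ≤ F0 J (-A) := hF0mono J ht2
          _ ≤ 1 / (-A) ^ 2 := hCheb J hJ1 (-A) (by linarith)
          _ = 1 / A ^ 2 := by rw [neg_pow]; ring_nf
          _ ≤ u₀ := hAu
      have hmem := hF0mem J t
      calc ‖K (F0 J t) - K 0‖ = |K (F0 J t) - K 0| := rfl
        _ ≤ G (F0 J t) := hKdiff _ hmem
        _ ≤ G u₀ := hGmono _ _ hmem.1 hFt hu₀le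
        _ ≤ δ/4 := hGu₀.le
    -- bound on the right piece
    have hB2 : ‖∫ t in (-A)..b, (K (F0 J t) - K 0)‖ ≤ C * |b - (-A)| := by
      apply intervalIntegral.norm_integral_le_of_norm_le_const
      intro t ht
      have hmem := hF0mem J t
      calc ‖K (F0 J t) - K 0‖ = |K (F0 J t) - K 0| := rfl
        _ ≤ G (F0 J t) := hKdiff _ hmem
        _ ≤ C := hGmono _ _ hmem.1 hmem.2 le_rfl
    have habs1 : |(-A) - a| = -A - a := abs_of_nonneg (by linarith)
    have habs2 : |b - (-A)| = b + A := by
      rw [abs_of_nonneg (by linarith)]; ring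
    have hna : (0:ℝ) < -a := by linarith
    have hnum : ‖∫ t in a..b, (K (F0 J t) - K 0)‖ ≤ (δ/2) * (-a) := by
      rw [hsplit]
      have k0 := norm_add_le (∫ t in a..(-A), (K (F0 J t) - K 0))
        (∫ t in (-A)..b, (K (F0 J t) - K 0))
      have k1 : (δ/4) * |(-A) - a| ≤ (δ/4) * (-a) := by
        rw [habs1]
        apply mul_le_mul_of_nonneg_left (by linarith) (by positivity)
      have k2 : C * |b - (-A)| ≤ (δ/4) * (-a) := by
        rw [habs2]
        have hd : 8 * A * (C + 1) ≤ -a * δ := by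
          rw [div_le_iff₀ hδ] at hbig2; linarith
        nlinarith
      linarith
    calc ‖(1 / a) * ∫ t in a..b, (K (F0 J t) - K 0)‖
        = (1 / (-a)) * ‖∫ t in a..b, (K (F0 J t) - K 0)‖ := by
          rw [norm_mul, Real.norm_eq_abs (1/a), abs_div, abs_one,
            abs_of_neg haneg]
      _ ≤ (1 / (-a)) * ((δ/2) * (-a)) := by
          apply mul_le_mul_of_nonneg_left hnum (by positivity)
      _ = δ/2 := by
          have hane : a ≠ 0 := ne_of_lt haneg
          field_simp
      _ < δ := by linarith
  -- ## combine
  have hsum := h2.add h1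
  rw [zero_add] at hsum
  apply hsum.congr'
  filter_upwards [eventually_ge_atTop 1] with J hJ1
  have hJ0 : (0:ℝ) < J := by exact_mod_cast hJ1
  have hane : xJ0 J ≠ 0 := by
    rw [hxJ0]
    have : 0 < Real.sqrt J * ξ / σ := by positivity
    linarith
  rw [intervalIntegral.integral_sub (hII J _ _) intervalIntegrable_const,
    intervalIntegral.integral_const]
  field_simp
  rw [smul_eq_mul, sub_add_cancel]
end

section
/- In the large-portfolio limit with reinsurance of everything up to Value at Risk (a₁ = 0, a₂ = x_{εJ}), the normalized expected surplus satisfies G_J(I)/(Jξ) = γ + (1/x_J⁰)∫_{x_J⁰}^{x_{εJ}⁰} K(F_J⁰(t)) dt → γ − K(0) as J → ∞. Hence if K(0) < γ, the insurer's expected surplus is asymptotically positive while its Value at Risk is zero. -/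
open MeasureTheory Set Filter ProbabilityTheory

set_option maxHeartbeats 1000000

/-- Equation (4.6a): reinsuring everything up to Value at Risk in a large portfolio gives
normalized expected surplus `G_J/(Jξ) = γ + (1/x_J⁰)∫_{x_J⁰}^{x_{εJ}⁰} K(F_J⁰(t)) dt`,
which converges to `γ − K(0)`; hence if `K(0) < γ` the limit surplus is positive while
the insurer's Value at Risk is zero. -/
theorem stmt_19
    {Ω : Type*} [MeasurableSpace Ω] (P : Measure Ω) [IsProbabilityMeasure P]
    (Y : ℕ → Ω → ℝ) (hmeas : ∀ i, Measurable (Y i))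
    (hindep : iIndepFun Y P)
    (ξ σ γ : ℝ) (hξ : 0 < ξ) (hσ : 0 < σ) (hγ : 0 < γ)
    (hmean : ∀ i, ∫ ω, Y i ω ∂P = ξ)
    (hvar : ∀ i, ∫ ω, (Y i ω - ξ) ^ 2 ∂P = σ ^ 2)
    (hlind : ∀ η > (0:ℝ), Tendsto (fun J : ℕ =>
        (1 / (J * σ ^ 2)) * ∑ i ∈ Finset.range J,
          ∫ ω in {ω | η * (Real.sqrt J * σ) ≤ |Y i ω - ξ|}, (Y i ω - ξ) ^ 2 ∂P)
        atTop (nhds 0))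
    (X0 : ℕ → Ω → ℝ)
    (hX0 : ∀ J ω, X0 J ω = ((∑ i ∈ Finset.range J, Y i ω) - J * ξ) / (Real.sqrt J * σ))
    (F0 : ℕ → ℝ → ℝ) (hF0 : ∀ J t, F0 J t = (P {ω | X0 J ω ≤ t}).toReal)
    (ε : ℝ) (hε : ε ∈ Ioo (0:ℝ) 1)
    (xe : ℕ → ℝ) (hxe : ∀ J, xe J = sInf {x | 1 - F0 J x ≤ ε})
    (φε : ℝ) (hφε : Tendsto xe atTop (nhds φε))
    (W : ℝ → ℝ) (hWint : IntervalIntegrable W MeasureTheory.volume 0 1)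
    (K : ℝ → ℝ) (hK : ∀ u, K u = ∫ v in u..1, (W v - 1)) (hK0 : 0 < K 0)
    (xJ0 : ℕ → ℝ) (hxJ0 : ∀ J, xJ0 J = -(Real.sqrt J * ξ / σ))
    (GJ : ℕ → ℝ)
    (hGJ : ∀ J, GJ J = γ * (J * ξ)
        - Real.sqrt J * σ * ∫ t in (xJ0 J)..(xe J), K (F0 J t)) :
    (∀ J : ℕ, 1 ≤ J →
        GJ J / (J * ξ) = γ + (1 / xJ0 J) * ∫ t in (xJ0 J)..(xe J), K (F0 J t)) ∧
    Tendsto (fun J => GJ J / (J * ξ)) atTop (nhds (γ - K 0)) ∧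
    (K 0 < γ → 0 < γ - K 0) := by
  -- ## Moment facts
  have hYm : ∀ i, MemLp (Y i) 2 P := by
    intro i
    have hint : Integrable (fun ω => (Y i ω - ξ)^2) P := by
      by_contra hcon
      have h0 := integral_undef hcon
      rw [hvar i] at h0
      nlinarith [sq_nonneg σ]
    have h2 : MemLp (fun ω => Y i ω - ξ) 2 P :=
      (memLp_two_iff_integrable_sq ((hmeas i).sub measurable_const).aestronglyMeasurable).2 hint
    have h3 := h2.add (memLp_const ξ)
    have heq : ((fun ω => Y i ω - ξ) + fun _ => ξ) = Y i := by ext ω; simp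
    rwa [heq] at h3
  have hvarY : ∀ i, variance (Y i) P = σ^2 := by
    intro i
    rw [variance_eq_integral (hmeas i).aemeasurable]
    simp only [Pi.pow_apply, Pi.sub_apply, hmean i]
    exact hvar i
  have hvarS : ∀ J:ℕ, variance (∑ i ∈ Finset.range J, Y i) P = J * σ^2 := by
    intro J
    rw [IndepFun.variance_sum (fun i _ => hYm i)
      (fun i _ j _ hij => hindep.indepFun hij)]
    simp [hvarY, mul_comm]
  have hES : ∀ J:ℕ, (∫ ω, (∑ i ∈ Finset.range J, Y i) ω ∂P) = J * ξ := by
    intro J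
    simp_rw [Finset.sum_apply]
    rw [integral_finset_sum _ (fun i _ => ((hYm i).integrable one_le_two))]
    simp [hmean, mul_comm]
  -- ## Chebyshev bound for the normalized sum
  have cheb : ∀ J:ℕ, 1 ≤ J → ∀ t:ℝ, t < 0 → F0 J t ≤ 1 / t^2 := by
    intro J hJ t ht
    have hJ' : (0:ℝ) < J := by exact_mod_cast hJ
    have hs : (0:ℝ) < Real.sqrt J * σ := by positivity
    set S := ∑ i ∈ Finset.range J, Y i with hS
    have hc : (0:ℝ) < (-t) * (Real.sqrt J * σ) := mul_pos (by linarith) hs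
    have hsub : {ω | X0 J ω ≤ t} ⊆ {ω | (-t) * (Real.sqrt J * σ) ≤ |S ω - ∫ x, S x ∂P|} := by
      intro ω hω
      simp only [mem_setOf_eq] at *
      rw [hX0] at hω
      have h1 : S ω - J*ξ ≤ t * (Real.sqrt J * σ) := by
        rw [div_le_iff₀ hs] at hω
        simp only [S, Finset.sum_apply]; exact hω
      rw [hES J]
      have h2 : -(S ω - J*ξ) ≤ |S ω - J * ξ| := neg_le_abs _
      calc (-t) * (Real.sqrt J * σ) = -(t * (Real.sqrt J * σ)) := by ring
        _ ≤ -(S ω - J*ξ) := by linarith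
        _ ≤ |S ω - J * ξ| := h2
    have hmem : MemLp S 2 P := memLp_finsetSum' _ (fun i _ => hYm i)
    have hcheb := meas_ge_le_variance_div_sq (μ := P) hmem hc
    have hle := (measure_mono hsub).trans hcheb
    rw [hF0]
    have hbd : variance S P / ((-t) * (Real.sqrt J * σ))^2 = 1 / t^2 := by
      rw [hvarS J, mul_pow, mul_pow, Real.sq_sqrt hJ'.le, neg_pow]
      have ht2 : t ^ 2 ≠ 0 := pow_ne_zero _ ht.ne
      field_simp
    calc (P {ω | X0 J ω ≤ t}).toReal
        ≤ (ENNReal.ofReal (variance S P / ((-t) * (Real.sqrt J * σ))^2)).toReal :=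
          ENNReal.toReal_mono ENNReal.ofReal_ne_top hle
      _ ≤ 1 / t^2 := by
          rw [hbd, ENNReal.toReal_ofReal (by positivity)]
  -- ## Properties of F0 and K
  have hF01 : ∀ J t, F0 J t ∈ Icc (0:ℝ) 1 := by
    intro J t
    rw [hF0]
    constructor
    · exact ENNReal.toReal_nonneg
    · exact ENNReal.toReal_le_of_le_ofReal zero_le_one (by simpa using prob_le_one)
  have hF0mono : ∀ J, Monotone (F0 J) := by
    intro J a b hab
    rw [hF0, hF0]
    exact ENNReal.toReal_mono (measure_ne_top _ _)
      (measure_mono (fun ω hw => le_trans hw hab))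
  have hWg : IntervalIntegrable (fun v => W v - 1) volume 0 1 :=
    hWint.sub (intervalIntegrable_const)
  have hKcont : ContinuousOn K (Icc 0 1) := by
    have hI : IntegrableOn (fun v => W v - 1) (uIcc (0:ℝ) 1) volume := by
      rw [uIcc_of_le zero_le_one, integrableOn_Icc_iff_integrableOn_Ioc]
      simpa [intervalIntegrable_iff, uIoc_of_le zero_le_one] using hWg
    have hcp := intervalIntegral.continuousOn_primitive_interval_left (a := (0:ℝ)) (b := 1) hI
    rw [uIcc_of_le zero_le_one] at hcp
    exact hcp.congr (fun u _ => hK u)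
  obtain ⟨M, hM⟩ := isCompact_Icc.exists_bound_of_continuousOn hKcont
  have hM0 : 0 ≤ M := le_trans (norm_nonneg _) (hM 0 (by norm_num))
  have hMK : ∀ J t, |K (F0 J t)| ≤ M := by
    intro J t
    simpa [Real.norm_eq_abs] using hM _ (hF01 J t)
  have hclamp : Continuous (fun u : ℝ => max 0 (min 1 u)) :=
    continuous_const.max (continuous_const.min continuous_id)
  have hKc : Continuous (fun u : ℝ => K (max 0 (min 1 u))) := by
    apply hKcont.comp_continuous hclamp
    intro u
    constructor
    · exact le_max_left _ _
    · simp [max_le_iff, min_le_left]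
  have hKF0meas : ∀ J, Measurable (fun t => K (F0 J t)) := by
    intro J
    have heq : (fun t => K (F0 J t)) = (fun u : ℝ => K (max 0 (min 1 u))) ∘ (F0 J) := by
      ext t
      have hh := hF01 J t
      simp only [Function.comp_apply, min_eq_right hh.2, max_eq_right hh.1]
    rw [heq]
    exact hKc.measurable.comp (hF0mono J).measurable
  have hKFint : ∀ (J:ℕ) (a b : ℝ), IntervalIntegrable (fun t => K (F0 J t)) volume a b := by
    intro J a b
    rw [intervalIntegrable_iff]
    exact Integrable.mono' (g := fun _ => M)
      (integrableOn_const measure_Ioc_lt_top.ne)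
      ((hKF0meas J).aestronglyMeasurable.restrict)
      (ae_of_all _ (fun t => by simpa [Real.norm_eq_abs] using hMK J t))
  -- ## Part 1: the algebraic identity
  have part1 : ∀ J : ℕ, 1 ≤ J →
      GJ J / (J * ξ) = γ + (1 / xJ0 J) * ∫ t in (xJ0 J)..(xe J), K (F0 J t) := by
    intro J hJ
    have hJ' : (0:ℝ) < J := by exact_mod_cast hJ
    have hs : 0 < Real.sqrt J := Real.sqrt_pos.mpr hJ'
    have h2 : Real.sqrt J * Real.sqrt J = (J:ℝ) := Real.mul_self_sqrt hJ'.le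
    rw [hGJ J, hxJ0 J]
    set I := ∫ t in (-(Real.sqrt J * ξ / σ))..(xe J), K (F0 J t) with hI
    field_simp
    linear_combination (-(σ * I)) * h2
  -- ## Part 2: the limit
  have main : Tendsto (fun J => (1 / xJ0 J) * ∫ t in (xJ0 J)..(xe J), K (F0 J t))
      atTop (nhds (-K 0)) := by
    rw [Metric.tendsto_atTop]
    intro δ hδ
    have hc0 : ContinuousWithinAt K (Icc 0 1) 0 := hKcont 0 (by norm_num)
    obtain ⟨η, hη, hball⟩ := Metric.continuousWithinAt_iff.mp hc0 (δ/4) (by linarith)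
    set B := |φε| + 1 with hB
    set A := max B (max 1 (Real.sqrt (2/η))) with hA
    have hA1 : (1:ℝ) ≤ A := le_max_of_le_right (le_max_left _ _)
    have hAB : B ≤ A := le_max_left _ _
    have hA0 : (0:ℝ) < A := lt_of_lt_of_le one_pos hA1
    have hAsq : 2/η ≤ A^2 := by
      have h1 : Real.sqrt (2/η) ≤ A := le_max_of_le_right (le_max_right _ _)
      calc 2/η = (Real.sqrt (2/η))^2 := (Real.sq_sqrt (by positivity)).symm
        _ ≤ A^2 := by nlinarith [Real.sqrt_nonneg (2/η)]
    have hAη : ∀ t:ℝ, t ≤ -A → (1:ℝ)/t^2 < η := by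
      intro t h
      have ht2 : A^2 ≤ t^2 := by nlinarith
      have h1 : (1:ℝ)/t^2 ≤ 1/A^2 := one_div_le_one_div_of_le (by positivity) ht2
      have h2 : (1:ℝ)/A^2 < η := by
        rw [div_lt_iff₀ (by positivity)]
        have he : η*(2/η) = 2 := by field_simp
        nlinarith [mul_le_mul_of_nonneg_left hAsq hη.le]
      linarith
    set R := max (A+1) (4*(|K 0| + 2*M + 1)*A/δ) with hR
    have hR0 : (0:ℝ) < R := lt_of_lt_of_le (by linarith) (le_max_left _ _)
    obtain ⟨N1, hN1⟩ := Metric.tendsto_atTop.mp hφε 1 one_pos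
    set N2 := ⌈(R*σ/ξ)^2⌉₊ + 1 with hN2
    refine ⟨max (max N1 N2) 1, fun J hJ => ?_⟩
    have hJ1 : 1 ≤ J := le_trans (le_max_right _ _) hJ
    have hJN1 : N1 ≤ J := le_trans (le_trans (le_max_left _ _) (le_max_left _ _)) hJ
    have hJN2 : N2 ≤ J := le_trans (le_trans (le_max_right _ _) (le_max_left _ _)) hJ
    have hJ' : (0:ℝ) < J := by exact_mod_cast hJ1
    have hxR : R ≤ Real.sqrt J * ξ / σ := by
      have h1 : ((R*σ/ξ)^2 : ℝ) ≤ J := by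
        calc ((R*σ/ξ)^2:ℝ) ≤ (⌈(R*σ/ξ)^2⌉₊:ℝ) := Nat.le_ceil _
          _ ≤ (N2:ℝ) := by exact_mod_cast Nat.le_succ _
          _ ≤ J := by exact_mod_cast hJN2
      have h2 : R*σ/ξ ≤ Real.sqrt J := by
        calc R*σ/ξ = Real.sqrt ((R*σ/ξ)^2) := (Real.sqrt_sq (by positivity)).symm
          _ ≤ Real.sqrt J := Real.sqrt_le_sqrt h1
      rw [le_div_iff₀ hσ]
      calc R * σ = (R*σ/ξ) * ξ := by field_simp
        _ ≤ Real.sqrt J * ξ := mul_le_mul_of_nonneg_right h2 hξ.le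
    set x := xJ0 J with hxdef
    have hxval : x = -(Real.sqrt J * ξ / σ) := hxJ0 J
    have hxneg : x ≤ -R := by rw [hxval]; linarith
    have hxA : x ≤ -A - 1 := by
      have h : A + 1 ≤ R := le_max_left _ _
      linarith
    have hxlt0 : x < 0 := by linarith
    have hxne : x ≠ 0 := hxlt0.ne
    have hxabs : |x| = -x := abs_of_neg hxlt0
    set e := xe J with hedef
    have heB : |e| ≤ B := by
      have hd := hN1 J hJN1
      rw [Real.dist_eq] at hd
      calc |e| = |(e - φε) + φε| := by ring_nf
        _ ≤ |e - φε| + |φε| := abs_add_le _ _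
        _ ≤ B := by rw [hB]; linarith
    have hAe : -A ≤ e := by
      have h := neg_abs_le e
      linarith
    set h := fun t => K (F0 J t) with hh
    have hsplit : (∫ t in x..e, h t) = (∫ t in x..(-A), h t) + ∫ t in (-A)..e, h t :=
      (intervalIntegral.integral_add_adjacent_intervals (hKFint J x (-A)) (hKFint J (-A) e)).symm
    have hsub : (∫ t in x..(-A), (h t - K 0)) = (∫ t in x..(-A), h t) - K 0 * (-A - x) := by
      rw [intervalIntegral.integral_sub (hKFint J x (-A)) intervalIntegrable_const,
          intervalIntegral.integral_const]
      simp only [smul_eq_mul]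
      ring
    set E := (∫ t in x..(-A), (h t - K 0)) with hEdef
    set I2 := (∫ t in (-A)..e, h t) with hI2def
    have hE : |E| ≤ (δ/4) * |(-A) - x| := by
      have hb := intervalIntegral.norm_integral_le_of_norm_le_const (C := δ/4)
        (f := fun t => h t - K 0) (a := x) (b := -A) ?_
      · simpa [Real.norm_eq_abs, abs_sub_comm] using hb
      · intro t ht'
        rw [uIoc_of_le (by linarith : x ≤ -A)] at ht'
        have htA : t ≤ -A := ht'.2
        have htneg : t < 0 := lt_of_le_of_lt htA (by linarith)
        have hlt : F0 J t < η := lt_of_le_of_lt (cheb J hJ1 t htneg) (hAη t htA)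
        have hd := hball (hF01 J t) (by
          rw [Real.dist_eq, sub_zero, abs_of_nonneg (hF01 J t).1]; exact hlt)
        rw [Real.dist_eq] at hd
        simpa [Real.norm_eq_abs] using hd.le
    have hI2 : |I2| ≤ M * (2*A) := by
      have hb := intervalIntegral.norm_integral_le_of_norm_le_const (C := M)
        (f := h) (a := -A) (b := e) (fun t _ => by simpa [Real.norm_eq_abs] using hMK J t)
      rw [Real.norm_eq_abs] at hb
      have h2A : |e - (-A)| ≤ 2*A := by
        rw [abs_of_nonneg (by linarith)]
        have := le_abs_self e
        linarith
      nlinarith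
    have hT : (1 / x) * (∫ t in x..e, h t) - (-K 0) = E/x + I2/x - K 0 * A / x := by
      rw [hsplit]
      have hfirst : (∫ t in x..(-A), h t) = E + K 0 * (-A - x) := by rw [hsub]; ring
      rw [hfirst]
      field_simp
      ring
    rw [Real.dist_eq, hT]
    have habs : |E/x + I2/x - K 0 * A / x| ≤ |E|/|x| + |I2|/|x| + |K 0| * A / |x| := by
      calc |E/x + I2/x - K 0 * A / x| ≤ |E/x + I2/x| + |K 0 * A / x| := abs_sub _ _
        _ ≤ |E/x| + |I2/x| + |K 0 * A / x| := by
            have := abs_add_le (E/x) (I2/x); linarith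
        _ = |E|/|x| + |I2|/|x| + |K 0| * A / |x| := by
            rw [abs_div, abs_div, abs_div, abs_mul, abs_of_pos hA0]
    have h1 : |E|/|x| ≤ δ/4 := by
      rw [div_le_iff₀ (abs_pos.mpr hxne)]
      have hle : |(-A) - x| ≤ |x| := by
        rw [abs_of_nonneg (by linarith), hxabs]; linarith
      calc |E| ≤ δ/4 * |(-A) - x| := hE
        _ ≤ δ/4 * |x| := mul_le_mul_of_nonneg_left hle (by linarith)
    have h2 : |I2|/|x| + |K 0| * A / |x| ≤ δ/4 := by
      have hxRabs : 4*(|K 0| + 2*M + 1)*A/δ ≤ |x| := by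
        rw [hxabs]
        have : 4*(|K 0| + 2*M + 1)*A/δ ≤ R := le_max_right _ _
        linarith
      rw [← add_div, div_le_iff₀ (abs_pos.mpr hxne)]
      have hnum : |I2| + |K 0| * A ≤ (2*M + |K 0|)*A := by
        have hr : M*(2*A) + |K 0| * A = (2*M + |K 0|)*A := by ring
        linarith
      have hkey : δ/4 * (4*(|K 0| + 2*M + 1)*A/δ) = (|K 0| + 2*M + 1)*A := by
        field_simp
      have hx4 : (|K 0| + 2*M + 1)*A ≤ δ/4 * |x| := by
        rw [← hkey]
        exact mul_le_mul_of_nonneg_left hxRabs (by linarith)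
      have hr2 : (2*M + |K 0|)*A + A = (|K 0| + 2*M + 1)*A := by ring
      linarith [hA0.le]
    calc |E/x + I2/x - K 0 * A / x| ≤ |E|/|x| + (|I2|/|x| + |K 0| * A / |x|) := by linarith
      _ ≤ δ/4 + δ/4 := by linarith
      _ < δ := by linarith
  refine ⟨part1, ?_, fun hlt => by linarith⟩
  have h3 : Tendsto (fun J => γ + (1 / xJ0 J) * ∫ t in (xJ0 J)..(xe J), K (F0 J t))
      atTop (nhds (γ - K 0)) := by
    have := (tendsto_const_nhds (x := γ) (f := atTop (α := ℕ))).add main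
    simpa [sub_eq_add_neg] using this
  refine h3.congr' ?_
  filter_upwards [eventually_ge_atTop 1] with J hJ
  exact (part1 J hJ).symm
end
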